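/- arXiv:1705.08469 — 2 statements merged into one kernel-verified Lean document; each statement's English description precedes it below -/
import Mathlib

section
/- If f ∈ L¹(Ω) for a measure space Ω with finite measure, then there exists a smooth (C^∞), convex function Φ : ℝ → ℝ such that Φ(x)/|x| → ∞ as |x| → ∞ and ∫_Ω Φ(f(x)) dx < ∞. -/
open MeasureTheory Filter Topology


noncomputable def dvpH (a x : ℝ) : ℝ := Real.sqrt (a ^ 2 + x ^ 2) - a

noncomputable def dvpF (a : ℝ) (z : ℂ) : ℂ := ((a : ℂ) ^ 2 + z ^ 2) ^ (1 / 2 : ℂ) - (a : ℂ)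

lemma dvpH_nonneg {a : ℝ} (ha : 0 ≤ a) (x : ℝ) : 0 ≤ dvpH a x := by
  have h1 : Real.sqrt (a ^ 2) ≤ Real.sqrt (a ^ 2 + x ^ 2) :=
    Real.sqrt_le_sqrt (by nlinarith)
  have h2 : Real.sqrt (a ^ 2) = a := by
    exact Real.sqrt_sq ha
  simp only [dvpH]; linarith

lemma dvpH_le_abs {a : ℝ} (ha : 0 ≤ a) (x : ℝ) : dvpH a x ≤ |x| := by
  have h1 : Real.sqrt (a ^ 2 + x ^ 2) ≤ Real.sqrt ((a + |x|) ^ 2) :=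
    Real.sqrt_le_sqrt (by nlinarith [abs_nonneg x, sq_abs x])
  have h2 : Real.sqrt ((a + |x|) ^ 2) = a + |x| := by
    rw [Real.sqrt_sq (by positivity)]
  simp only [dvpH]; linarith

lemma dvpH_le_sq {a : ℝ} (ha : 0 < a) (x : ℝ) : dvpH a x ≤ x ^ 2 / (2 * a) := by
  have h1 : Real.sqrt (a ^ 2 + x ^ 2) ≤ Real.sqrt ((a + x ^ 2 / (2 * a)) ^ 2) := by
    apply Real.sqrt_le_sqrt
    have h0 : 0 ≤ (x ^ 2 / (2 * a)) ^ 2 := by positivity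
    have expand : (a + x ^ 2 / (2 * a)) ^ 2 = a ^ 2 + x ^ 2 + (x ^ 2 / (2 * a)) ^ 2 := by
      field_simp; ring
    linarith
  have h2 : Real.sqrt ((a + x ^ 2 / (2 * a)) ^ 2) = a + x ^ 2 / (2 * a) := by
    rw [Real.sqrt_sq (by positivity)]
  simp only [dvpH]; linarith

lemma abs_sub_le_dvpH {a : ℝ} (x : ℝ) : |x| - a ≤ dvpH a x := by
  have h1 : Real.sqrt (x ^ 2) ≤ Real.sqrt (a ^ 2 + x ^ 2) :=
    Real.sqrt_le_sqrt (by nlinarith)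
  have h2 : Real.sqrt (x ^ 2) = |x| := Real.sqrt_sq_eq_abs x
  simp only [dvpH]; linarith

lemma dvpH_continuous (a : ℝ) : Continuous (dvpH a) := by
  apply Continuous.sub _ continuous_const
  exact Real.continuous_sqrt.comp (by continuity)

lemma dvpH_convexOn {a : ℝ} (ha : 0 ≤ a) : ConvexOn ℝ Set.univ (dvpH a) := by
  set L : ℝ →ᵃ[ℝ] ℂ := AffineMap.lineMap (a : ℂ) ((a : ℂ) + Complex.I) with hL
  have key : ∀ x : ℝ, Real.sqrt (a ^ 2 + x ^ 2) = (Norm.norm ∘ L) x := by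
    intro x
    have hmap : L x = (a : ℂ) + (x : ℂ) * Complex.I := by
      simp [hL, AffineMap.lineMap_apply, Complex.real_smul]; ring
    rw [Function.comp_apply, hmap, Complex.norm_def,
      Complex.normSq_add_mul_I]
  have h1 : ConvexOn ℝ Set.univ (Norm.norm ∘ L) := by
    have := (convexOn_univ_norm (E := ℂ)).comp_affineMap L
    simpa using this
  have h2 : ConvexOn ℝ Set.univ (fun x => Real.sqrt (a ^ 2 + x ^ 2)) := by
    rw [show (Norm.norm ∘ L) = fun x => Real.sqrt (a ^ 2 + x ^ 2)
        from funext fun x => (key x).symm] at h1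
    exact h1
  exact h2.sub (concaveOn_const _ convex_univ)

lemma re_cpow_half_nonneg (w : ℂ) : 0 ≤ (w ^ (1 / 2 : ℂ)).re := by
  rcases eq_or_ne w 0 with rfl | hw
  · rw [Complex.zero_cpow (by norm_num : (1 / 2 : ℂ) ≠ 0)]; simp
  · rw [Complex.cpow_def_of_ne_zero hw, Complex.exp_re]
    apply mul_nonneg (Real.exp_nonneg _)
    have him : (Complex.log w * (1 / 2)).im = Complex.arg w / 2 := by
      simp [Complex.mul_im, Complex.log_im]; ring
    rw [him]
    apply Real.cos_nonneg_of_mem_Icc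
    have h1 := Complex.neg_pi_lt_arg w
    have h2 := Complex.arg_le_pi w
    rw [Set.mem_Icc]
    constructor <;> linarith

lemma sq_cpow_half {w : ℂ} (hw : w ≠ 0) : w ^ (1 / 2 : ℂ) * w ^ (1 / 2 : ℂ) = w := by
  rw [← Complex.cpow_add _ _ hw]
  norm_num

lemma dvpF_re_pos {a : ℝ} (ha : 1 ≤ a) {z : ℂ} (hz : |z.im| < 1) :
    0 < ((a : ℂ) ^ 2 + z ^ 2).re := by
  have h1 : ((a : ℂ) ^ 2 + z ^ 2).re = a ^ 2 + (z.re * z.re - z.im * z.im) := by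
    simp [pow_two, Complex.add_re, Complex.mul_re]
  rw [h1]
  have h2 : |z.im| * |z.im| < 1 := by
    nlinarith [abs_nonneg z.im]
  nlinarith [sq_abs z.im, abs_nonneg z.im]

lemma dvpF_norm_le {a : ℝ} (ha : 1 ≤ a) {z : ℂ} (hz : |z.im| < 1) :
    ‖dvpF a z‖ ≤ ‖z‖ ^ 2 / a := by
  set w : ℂ := (a : ℂ) ^ 2 + z ^ 2 with hwdef
  have hwre : 0 < w.re := dvpF_re_pos ha hz
  have hw0 : w ≠ 0 := fun h => by rw [h] at hwre; simp at hwre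
  set s : ℂ := w ^ (1 / 2 : ℂ) with hsdef
  have hsre : 0 ≤ s.re := re_cpow_half_nonneg w
  have hre : (a : ℝ) ≤ (s + (a : ℂ)).re := by
    simp only [Complex.add_re, Complex.ofReal_re]; linarith
  have hnorm_sa : (a : ℝ) ≤ ‖s + (a : ℂ)‖ := le_trans hre (Complex.re_le_norm _)
  have hsa0 : s + (a : ℂ) ≠ 0 := by
    intro h
    rw [h] at hnorm_sa; simp at hnorm_sa; linarith
  have hid : dvpF a z = z ^ 2 / (s + (a : ℂ)) := by
    rw [eq_div_iff hsa0]
    have h1 : s * s = w := sq_cpow_half hw0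
    have e : dvpF a z = s - (a : ℂ) := rfl
    rw [e]
    have h3 : (s - (a : ℂ)) * (s + (a : ℂ)) = s * s - (a : ℂ) ^ 2 := by ring
    rw [h3, h1, hwdef]
    ring
  rw [hid, norm_div, norm_pow]
  apply div_le_div_of_nonneg_left _ (by linarith) hnorm_sa
  positivity

lemma dvpF_differentiableOn {a : ℝ} (ha : 1 ≤ a) :
    DifferentiableOn ℂ (dvpF a) {z : ℂ | |z.im| < 1} := by
  intro z hz
  apply DifferentiableAt.differentiableWithinAt
  have h1 : DifferentiableAt ℂ (fun z : ℂ => (a : ℂ) ^ 2 + z ^ 2) z :=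
    (differentiableAt_const _).add (differentiableAt_id.pow 2)
  have h2 : HasDerivAt (fun z : ℂ => (a : ℂ) ^ 2 + z ^ 2) (2 * z) z := by
    simpa using ((hasDerivAt_id z).pow 2).const_add ((a : ℂ) ^ 2)
  have hmem : ((a : ℂ) ^ 2 + z ^ 2) ∈ Complex.slitPlane :=
    Complex.mem_slitPlane_iff.2 (Or.inl (dvpF_re_pos ha hz))
  exact ((h2.cpow_const hmem).sub_const _).differentiableAt

lemma dvpF_real {a : ℝ} (ha : 0 ≤ a) (x : ℝ) : dvpF a (x : ℂ) = ((dvpH a x : ℝ) : ℂ) := by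
  have h1 : ((a : ℂ) ^ 2 + (x : ℂ) ^ 2) = (((a ^ 2 + x ^ 2 : ℝ)) : ℂ) := by push_cast; ring
  have h2 : (0 : ℝ) ≤ a ^ 2 + x ^ 2 := by positivity
  rw [dvpF, h1, dvpH]
  have h3 : ((a ^ 2 + x ^ 2 : ℝ) : ℂ) ^ (1 / 2 : ℂ) = (((a ^ 2 + x ^ 2) ^ (1 / 2 : ℝ) : ℝ) : ℂ) := by
    rw [Complex.ofReal_cpow h2]; norm_num
  rw [h3, ← Real.sqrt_eq_rpow]
  push_cast
  ring

/-- Smooth de la Vallée Poussin criterion: for an integrable function `f` on a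
finite measure space there is a smooth convex superlinear `Φ` with
`∫ Φ(f) < ∞`. -/
theorem smooth_de_la_vallee_poussin
    {Ω : Type*} [MeasurableSpace Ω] (μ : Measure Ω) [IsFiniteMeasure μ]
    (f : Ω → ℝ) (hf : Integrable f μ) :
    ∃ Φ : ℝ → ℝ, ContDiff ℝ (⊤ : ℕ∞) Φ ∧ ConvexOn ℝ Set.univ Φ ∧
      Tendsto (fun x : ℝ => Φ x / |x|) (cocompact ℝ) atTop ∧
      Integrable (fun ω => Φ (f ω)) μ := by
  classical
  set M : ℝ := (μ Set.univ).toReal with hM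
  have hM0 : 0 ≤ M := ENNReal.toReal_nonneg
  -- the truncated tail functions
  set F : ℕ → Ω → ℝ := fun k ω => if (k : ℝ) < |f ω| then |f ω| else 0 with hFdef
  have hFmeas : ∀ k, AEStronglyMeasurable (F k) μ := by
    intro k
    have hm : Measurable (fun r : ℝ => if (k : ℝ) < |r| then |r| else 0) :=
      Measurable.ite (measurableSet_lt measurable_const continuous_abs.measurable)
        continuous_abs.measurable measurable_const
    exact (hm.comp_aemeasurable hf.aemeasurable).aestronglyMeasurable
  have hFbound : ∀ k, ∀ᵐ ω ∂μ, ‖F k ω‖ ≤ ‖f ω‖ := by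
    intro k
    filter_upwards with ω
    simp only [hFdef, Real.norm_eq_abs]
    split_ifs with h
    · rw [abs_abs]
    · simpa using abs_nonneg (f ω)
  have hFint : ∀ k, Integrable (F k) μ :=
    fun k => Integrable.mono hf (hFmeas k) (hFbound k)
  -- choice of thresholds
  have key : ∀ n : ℕ, ∃ k : ℕ, (∫ ω, F k ω ∂μ) ≤ (2⁻¹ : ℝ) ^ n := by
    have hlim : ∀ᵐ ω ∂μ, Tendsto (fun k => F k ω) atTop (𝓝 0) := by
      filter_upwards with ω
      have h0 : Tendsto (fun _ : ℕ => (0 : ℝ)) atTop (𝓝 0) := tendsto_const_nhds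
      apply Tendsto.congr' _ h0
      filter_upwards [eventually_ge_atTop ⌈|f ω|⌉₊] with k hk
      have h1 : ¬ ((k : ℝ) < |f ω|) :=
        not_lt.2 (le_trans (Nat.le_ceil _) (by exact_mod_cast hk))
      simp [hFdef, h1]
    have hT : Tendsto (fun k => ∫ ω, F k ω ∂μ) atTop (𝓝 0) := by
      have := tendsto_integral_of_dominated_convergence (fun ω => ‖f ω‖)
        hFmeas hf.norm hFbound hlim
      simpa using this
    intro n
    have hpos : (0 : ℝ) < (2⁻¹ : ℝ) ^ n := by positivity
    obtain ⟨k, hk⟩ := (hT.eventually_lt_const hpos).exists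
    exact ⟨k, hk.le⟩
  choose t ht using key
  -- the scales
  set a : ℕ → ℝ := fun n => 2 ^ n * (((t n : ℝ)) ^ 2 + 1) * (M + 1) with hadef
  have h2n : ∀ n : ℕ, (1 : ℝ) ≤ 2 ^ n := fun n => one_le_pow₀ (by norm_num)
  have htn0 : ∀ n, (0 : ℝ) ≤ (t n : ℝ) := fun n => Nat.cast_nonneg _
  have ha1 : ∀ n, 1 ≤ a n := by
    intro n
    have h1 := h2n n
    have e1 : (1 : ℝ) ≤ (t n : ℝ) ^ 2 + 1 := by nlinarith [sq_nonneg ((t n : ℝ))]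
    have e2 : (1 : ℝ) ≤ M + 1 := by linarith
    have e3 : (1 : ℝ) * 1 ≤ 2 ^ n * ((t n : ℝ) ^ 2 + 1) :=
      mul_le_mul h1 e1 zero_le_one (by positivity)
    have e4 : ((1 : ℝ) * 1) * 1 ≤ (2 ^ n * ((t n : ℝ) ^ 2 + 1)) * (M + 1) :=
      mul_le_mul e3 e2 zero_le_one (by positivity)
    simp only [hadef]
    linarith
  have ha0' : ∀ n, (0 : ℝ) ≤ a n := fun n => le_trans zero_le_one (ha1 n)
  have ha0 : ∀ n, (0 : ℝ) < a n := fun n => lt_of_lt_of_le zero_lt_one (ha1 n)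
  have ha2 : ∀ n, (2 : ℝ) ^ n ≤ a n := by
    intro n
    have e6 : (1 : ℝ) ≤ ((t n : ℝ) ^ 2 + 1) * (M + 1) := by
      nlinarith [sq_nonneg ((t n : ℝ))]
    have e7 : (2:ℝ) ^ n * 1 ≤ 2 ^ n * (((t n : ℝ) ^ 2 + 1) * (M + 1)) :=
      mul_le_mul_of_nonneg_left e6 (by positivity)
    simp only [hadef]
    calc (2:ℝ) ^ n = 2 ^ n * 1 := by ring
      _ ≤ 2 ^ n * (((t n : ℝ) ^ 2 + 1) * (M + 1)) := e7
      _ = 2 ^ n * ((t n : ℝ) ^ 2 + 1) * (M + 1) := by ring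
  -- the function
  set Φ : ℝ → ℝ := fun x => ∑' n, dvpH (a n) x with hΦdef
  have hterm_le : ∀ (n : ℕ) (x : ℝ), dvpH (a n) x ≤ x ^ 2 / 2 * (2⁻¹ : ℝ) ^ n := by
    intro n x
    calc dvpH (a n) x ≤ x ^ 2 / (2 * a n) := dvpH_le_sq (ha0 n) x
      _ ≤ x ^ 2 / (2 * 2 ^ n) := by
          apply div_le_div_of_nonneg_left (sq_nonneg x) (by positivity)
          linarith [ha2 n]
      _ = x ^ 2 / 2 * (2⁻¹ : ℝ) ^ n := by
          rw [inv_pow]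
          have h3 : ((2:ℝ) ^ n) ≠ 0 := by positivity
          field_simp
  have hsummable : ∀ x : ℝ, Summable (fun n => dvpH (a n) x) := by
    intro x
    apply Summable.of_nonneg_of_le (fun n => dvpH_nonneg (ha0' n) x) (fun n => hterm_le n x)
    exact ((summable_geometric_of_lt_one (by norm_num) (by norm_num))).mul_left _
  -- smoothness
  have hsmooth : ContDiff ℝ (⊤ : ℕ∞) Φ := by
    refine ContDiff.of_le ?_ (le_top : ((⊤ : ℕ∞) : WithTop ℕ∞) ≤ ⊤)
    rw [contDiff_omega_iff_analyticOnNhd]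
    intro x₀ _
    set U : Set ℂ := Metric.ball (x₀ : ℂ) 1 with hUdef
    have hUopen : IsOpen U := Metric.isOpen_ball
    have hmemU : (x₀ : ℂ) ∈ U := Metric.mem_ball_self one_pos
    have hUdist : ∀ z ∈ U, ‖z - (x₀ : ℂ)‖ < 1 := by
      intro z hz
      rwa [hUdef, Metric.mem_ball, dist_eq_norm] at hz
    have hUim : ∀ z ∈ U, |z.im| < 1 := by
      intro z hz
      have h2 : |(z - (x₀ : ℂ)).im| ≤ ‖z - (x₀ : ℂ)‖ := Complex.abs_im_le_norm _
      have h3 : (z - (x₀ : ℂ)).im = z.im := by simp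
      rw [h3] at h2
      exact lt_of_le_of_lt h2 (hUdist z hz)
    have hUnorm : ∀ z ∈ U, ‖z‖ ≤ |x₀| + 1 := by
      intro z hz
      have h1 : ‖z‖ ≤ ‖z - (x₀ : ℂ)‖ + ‖((x₀ : ℝ) : ℂ)‖ := by
        simpa using norm_add_le (z - (x₀ : ℂ)) ((x₀ : ℝ) : ℂ)
      have h2 : ‖((x₀ : ℝ) : ℂ)‖ = |x₀| := by
        rw [Complex.norm_real, Real.norm_eq_abs]
      linarith [hUdist z hz]
    have hu : Summable (fun n : ℕ => (|x₀| + 1) ^ 2 * (2⁻¹ : ℝ) ^ n) :=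
      ((summable_geometric_of_lt_one (by norm_num) (by norm_num))).mul_left _
    have hFd : ∀ n : ℕ, DifferentiableOn ℂ (dvpF (a n)) U := fun n =>
      (dvpF_differentiableOn (ha1 n)).mono (fun z hz => hUim z hz)
    have hF_le : ∀ (n : ℕ) (z : ℂ), z ∈ U →
        ‖dvpF (a n) z‖ ≤ (|x₀| + 1) ^ 2 * (2⁻¹ : ℝ) ^ n := by
      intro n z hz
      calc ‖dvpF (a n) z‖ ≤ ‖z‖ ^ 2 / a n := dvpF_norm_le (ha1 n) (hUim z hz)
        _ ≤ (|x₀| + 1) ^ 2 / 2 ^ n :=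
            div_le_div₀ (by positivity)
              (pow_le_pow_left₀ (norm_nonneg _) (hUnorm z hz) 2) (by positivity) (ha2 n)
        _ = (|x₀| + 1) ^ 2 * (2⁻¹ : ℝ) ^ n := by rw [inv_pow, div_eq_mul_inv]
    have hSd : DifferentiableOn ℂ (fun z => ∑' n, dvpF (a n) z) U :=
      Complex.differentiableOn_tsum_of_summable_norm hu hFd hUopen hF_le
    have hSan : AnalyticOnNhd ℂ (fun z => ∑' n, dvpF (a n) z) U :=
      hSd.analyticOnNhd hUopen
    have hSR : AnalyticAt ℝ (fun z => ∑' n, dvpF (a n) z) ((x₀ : ℝ) : ℂ) :=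
      (hSan _ hmemU).restrictScalars
    have hre : AnalyticAt ℝ (fun x : ℝ => (∑' n, dvpF (a n) ((x : ℝ) : ℂ)).re) x₀ := by
      have heq : (fun x : ℝ => (∑' n, dvpF (a n) ((x : ℝ) : ℂ)).re)
          = (⇑Complex.reCLM ∘ ((fun z => ∑' n, dvpF (a n) z) ∘ ⇑Complex.ofRealCLM)) := by
        funext x
        simp [Function.comp]
      rw [heq]
      refine AnalyticAt.comp ?_ (AnalyticAt.comp ?_ ?_)
      · exact Complex.reCLM.analyticAt _
      · exact hSR
      · exact Complex.ofRealCLM.analyticAt _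
    have hΦeq : Φ = fun x : ℝ => (∑' n, dvpF (a n) ((x : ℝ) : ℂ)).re := by
      funext x
      have h2 : (∑' n, dvpF (a n) ((x : ℝ) : ℂ)) = (((∑' n, dvpH (a n) x : ℝ)) : ℂ) := by
        rw [Complex.ofReal_tsum]
        exact tsum_congr (fun n => dvpF_real (ha0' n) x)
      simp [hΦdef, h2]
    rw [hΦeq]
    exact hre
  -- convexity
  have hconv : ConvexOn ℝ Set.univ Φ := by
    refine ⟨convex_univ, ?_⟩
    intro x _ y _ p q hp hq hpq
    have hterm : ∀ n : ℕ, dvpH (a n) (p • x + q • y)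
        ≤ p * dvpH (a n) x + q * dvpH (a n) y := by
      intro n
      have := (dvpH_convexOn (ha0' n)).2 (Set.mem_univ x) (Set.mem_univ y) hp hq hpq
      simpa [smul_eq_mul] using this
    have hs1 : Summable (fun n => p * dvpH (a n) x + q * dvpH (a n) y) :=
      ((hsummable x).mul_left p).add ((hsummable y).mul_left q)
    have h1 : Φ (p • x + q • y) ≤ ∑' n, (p * dvpH (a n) x + q * dvpH (a n) y) :=
      Summable.tsum_le_tsum hterm (hsummable _) hs1
    have h2 : (∑' n, (p * dvpH (a n) x + q * dvpH (a n) y))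
        = p * Φ x + q * Φ y := by
      rw [Summable.tsum_add ((hsummable x).mul_left p) ((hsummable y).mul_left q),
        tsum_mul_left, tsum_mul_left]
    rw [h2] at h1
    simpa [smul_eq_mul] using h1
  -- superlinearity
  have hsl : Tendsto (fun x : ℝ => Φ x / |x|) (cocompact ℝ) atTop := by
    rw [tendsto_atTop]
    intro K
    obtain ⟨N, hN⟩ := exists_nat_ge (2 * K)
    set A : ℝ := 1 + ∑ n ∈ Finset.range N, a n with hAdef
    have hA1 : 1 ≤ A := by
      have : 0 ≤ ∑ n ∈ Finset.range N, a n := Finset.sum_nonneg fun n _ => (ha0 n).le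
      simp only [hAdef]; linarith
    have hAub : ∀ n ∈ Finset.range N, a n ≤ A := by
      intro n hn
      have h1 := Finset.single_le_sum (f := a) (fun i _ => (ha0 i).le) hn
      simp only [hAdef]; linarith
    have main : ∀ x : ℝ, 2 * A ≤ |x| → K ≤ Φ x / |x| := by
      intro x hx
      have hxpos : 0 < |x| := lt_of_lt_of_le (by linarith) hx
      rw [le_div_iff₀ hxpos]
      have hlow : ∀ n ∈ Finset.range N, |x| - A ≤ dvpH (a n) x := by
        intro n hn
        have h1 := abs_sub_le_dvpH (a := a n) x
        have h2 := hAub n hn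
        linarith
      have hsum : (N : ℝ) * (|x| - A) ≤ ∑ n ∈ Finset.range N, dvpH (a n) x := by
        have h3 := Finset.sum_le_sum hlow
        simp only [Finset.sum_const, Finset.card_range, nsmul_eq_mul] at h3; linarith
      have hpartial : (∑ n ∈ Finset.range N, dvpH (a n) x) ≤ Φ x :=
        Summable.sum_le_tsum _ (fun n _ => dvpH_nonneg (ha0' n) x) (hsummable x)
      have hNnn : (0:ℝ) ≤ (N:ℝ) := Nat.cast_nonneg N
      nlinarith
    rw [cocompact_eq_atBot_atTop, eventually_sup]
    constructor
    · filter_upwards [eventually_le_atBot (-(2*A))] with x hx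
      apply main
      rw [abs_of_nonpos (by linarith)]
      linarith
    · filter_upwards [eventually_ge_atTop (2*A)] with x hx
      apply main
      rw [abs_of_nonneg (by linarith)]
      linarith
  -- integrability
  have hgnonneg : ∀ (n : ℕ) (ω : Ω), 0 ≤ dvpH (a n) (f ω) :=
    fun n ω => dvpH_nonneg (ha0' n) (f ω)
  have hgmeas : ∀ n, AEStronglyMeasurable (fun ω => dvpH (a n) (f ω)) μ := fun n =>
    (dvpH_continuous (a n)).comp_aestronglyMeasurable hf.aestronglyMeasurable
  have hgint : ∀ n, Integrable (fun ω => dvpH (a n) (f ω)) μ := by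
    intro n
    apply Integrable.mono hf (hgmeas n)
    filter_upwards with ω
    rw [Real.norm_eq_abs, Real.norm_eq_abs, abs_of_nonneg (hgnonneg n ω)]
    exact dvpH_le_abs (ha0' n) (f ω)
  have hgbound : ∀ n, (∫ ω, dvpH (a n) (f ω) ∂μ) ≤ 2 * (2⁻¹ : ℝ) ^ n := by
    intro n
    have hptw : ∀ ω, dvpH (a n) (f ω) ≤ ((t n : ℝ) ^ 2 / (2 * a n)) + F (t n) ω := by
      intro ω
      simp only [hFdef]
      by_cases hcase : ((t n : ℕ) : ℝ) < |f ω|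
      · rw [if_pos hcase]
        have h1 := dvpH_le_abs (ha0' n) (f ω)
        have h2 : (0:ℝ) ≤ (t n : ℝ) ^ 2 / (2 * a n) := by positivity
        linarith
      · rw [if_neg hcase]
        have h1 := dvpH_le_sq (ha0 n) (f ω)
        have h2 : f ω ^ 2 ≤ (t n : ℝ) ^ 2 := by
          have h3 := not_lt.1 hcase
          nlinarith [sq_abs (f ω), abs_nonneg (f ω), htn0 n]
        have h3 : f ω ^ 2 / (2 * a n) ≤ (t n : ℝ) ^ 2 / (2 * a n) :=
          (div_le_div_iff_of_pos_right (by positivity)).2 h2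
        linarith
    have hconst : Integrable (fun _ : Ω => (t n : ℝ) ^ 2 / (2 * a n)) μ :=
      integrable_const _
    calc (∫ ω, dvpH (a n) (f ω) ∂μ)
        ≤ ∫ ω, (((t n : ℝ) ^ 2 / (2 * a n)) + F (t n) ω) ∂μ :=
          integral_mono (hgint n) (hconst.add (hFint (t n))) hptw
      _ = (t n : ℝ) ^ 2 / (2 * a n) * M + ∫ ω, F (t n) ω ∂μ := by
          rw [integral_add hconst (hFint (t n)), integral_const, smul_eq_mul, mul_comm]; rfl
      _ ≤ (2⁻¹ : ℝ) ^ n + (2⁻¹ : ℝ) ^ n := by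
          have h1 : (t n : ℝ) ^ 2 / (2 * a n) * M ≤ (2⁻¹ : ℝ) ^ n := by
            have h2 : (0:ℝ) < 2 ^ n := by positivity
            have h5 : (2⁻¹ : ℝ) ^ n * (2:ℝ) ^ n = 1 := by
              rw [← mul_pow]; norm_num
            have h6 : (0:ℝ) < a n := ha0 n
            rw [div_mul_eq_mul_div, div_le_iff₀ (by positivity)]
            simp only [hadef]
            have h7 : (2:ℝ)⁻¹ ^ n * (2 * (2 ^ n * ((t n : ℝ) ^ 2 + 1) * (M + 1)))
                = 2 * (((t n : ℝ) ^ 2 + 1) * (M + 1)) := by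
              rw [show (2:ℝ)⁻¹ ^ n * (2 * (2 ^ n * ((t n : ℝ) ^ 2 + 1) * (M + 1)))
                  = (2⁻¹ ^ n * 2 ^ n) * (2 * (((t n : ℝ) ^ 2 + 1) * (M + 1))) from by ring,
                h5, one_mul]
            nlinarith [sq_nonneg ((t n : ℝ)), hM0,
              mul_nonneg (sq_nonneg ((t n : ℝ))) hM0]
          linarith [ht n]
      _ = 2 * (2⁻¹ : ℝ) ^ n := by ring
  have hΦnn : ∀ ω, 0 ≤ Φ (f ω) := fun ω => tsum_nonneg (fun n => hgnonneg n ω)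
  have hmeasΦ : AEStronglyMeasurable (fun ω => Φ (f ω)) μ :=
    hsmooth.continuous.comp_aestronglyMeasurable hf.aestronglyMeasurable
  have hintΦ : Integrable (fun ω => Φ (f ω)) μ := by
    refine ⟨hmeasΦ, ?_⟩
    rw [hasFiniteIntegral_iff_ofReal (Eventually.of_forall hΦnn)]
    have heq : ∀ ω, ENNReal.ofReal (Φ (f ω))
        = ∑' n, ENNReal.ofReal (dvpH (a n) (f ω)) := by
      intro ω
      rw [hΦdef]
      exact ENNReal.ofReal_tsum_of_nonneg (fun n => hgnonneg n ω) (hsummable (f ω))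
    calc (∫⁻ ω, ENNReal.ofReal (Φ (f ω)) ∂μ)
        = ∫⁻ ω, ∑' n, ENNReal.ofReal (dvpH (a n) (f ω)) ∂μ := lintegral_congr heq
      _ = ∑' n, ∫⁻ ω, ENNReal.ofReal (dvpH (a n) (f ω)) ∂μ :=
          lintegral_tsum (fun n =>
            (ENNReal.measurable_ofReal.comp_aemeasurable (hgmeas n).aemeasurable))
      _ ≤ ∑' n : ℕ, ENNReal.ofReal (2 * (2⁻¹ : ℝ) ^ n) := by
          apply ENNReal.tsum_le_tsum
          intro n
          rw [← ofReal_integral_eq_lintegral_ofReal (hgint n)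
            (Eventually.of_forall (hgnonneg n))]
          exact ENNReal.ofReal_le_ofReal (hgbound n)
      _ < ⊤ := by
          have h1 : ∀ n : ℕ, ENNReal.ofReal (2 * (2⁻¹ : ℝ) ^ n)
              = ENNReal.ofReal 2 * (ENNReal.ofReal 2⁻¹) ^ n := by
            intro n
            rw [ENNReal.ofReal_mul (by norm_num), ENNReal.ofReal_pow (by norm_num)]
          rw [tsum_congr h1, ENNReal.tsum_mul_left]
          apply ENNReal.mul_lt_top ENNReal.ofReal_lt_top
          have h2 : ENNReal.ofReal 2⁻¹ < 1 := by
            rw [ENNReal.ofReal_lt_one]; norm_num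
          rw [ENNReal.tsum_geometric]
          rw [lt_top_iff_ne_top]
          apply ENNReal.inv_ne_top.2
          intro h3
          rw [tsub_eq_zero_iff_le] at h3
          exact absurd (lt_of_lt_of_le h2 (le_refl _)) (not_lt.2 h3)
  exact ⟨Φ, hsmooth, hconv, hsl, hintΦ⟩
end

section
/- Let W be convex with linear growth and let u ∈ W^{1,1}(𝕋), ξ : 𝕋 → [−W^∞, W^∞] measurable with weak derivative ξ_x ∈ L²(𝕋), such that ∫_𝕋 W(w_x) dx − ∫_𝕋 W(u_x) dx ≥ ∫_𝕋 ξ(w_x − u_x) dx for all w ∈ W^{1,1}(𝕋). Then −ξ_x ∈ ∂Ē(u), where Ē(w) = ∫_𝕋 W(w_x) dx + W^∞ |D^s w|(𝕋) is the relaxed energy on BV(𝕋); i.e., Ē(w) − Ē(u) ≥ −∫_𝕋 ξ_x (w − u) dx for all w ∈ BV(𝕋). -/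
/-!
Mollify the competitor by forward averages `w_ε x = ⨍ t in x..x+ε, w t`: these lie in
`W^{1,1}(𝕋)` with derivative `(w (x + ε) - w x) / ε`. Convexity makes `W` Lipschitz with
constant `W^∞`, so Jensen's inequality on the absolutely continuous part of `Dw` and the Lipschitz
bound on its singular part give `∫ W((w_ε)_x) ≤ ∫ W(w_x) + W^∞ |D^s w|(𝕋)`. Testing the
hypothesis with `w_ε` and integrating by parts yields `-∫ ξ_x (w_ε - u) ≤ Ē(w) - Ē(u)`; as
`ε → 0`, `w_ε → w` almost everywhere by Lebesgue's differentiation theorem, and dominated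
convergence concludes.
-/

open MeasureTheory Filter Topology

/-- `w ∈ W^{1,1}(𝕋)`: `w` is a 1-periodic primitive of a 1-periodic integrable
function `wx` (its weak derivative). -/
def IsW11Per (w wx : ℝ → ℝ) : Prop :=
  Function.Periodic w 1 ∧ Function.Periodic wx 1 ∧
    IntegrableOn wx (Set.Icc 0 1) ∧
    ∀ x : ℝ, w x = w 0 + ∫ t in (0:ℝ)..x, wx t

open Set Function

theorem ConvexOn.sub_le_mul_sub_of_tendsto_div_atTop {f : ℝ → ℝ} {L : ℝ}
    (hf : ConvexOn ℝ univ f) (hL : Tendsto (fun t => f t / t) atTop (𝓝 L))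
    {a b : ℝ} (hab : a ≤ b) : f b - f a ≤ L * (b - a) := by
  rcases hab.eq_or_lt with rfl | hab
  · simp
  set s := (f b - f a) / (b - a)
  -- every secant from `a` further out is steeper, and their slopes tend to `L`
  have hsecant : ∀ t > b, s * (t - a) ≤ f t - f a := fun t ht => by
    have := hf.secant_mono (mem_univ a) (mem_univ b) (mem_univ t) hab.ne' (by linarith) ht.le
    rwa [le_div_iff₀ (by linarith)] at this
  have hlhs : Tendsto (fun t => s - s * a * t⁻¹) atTop (𝓝 s) := by
    simpa using tendsto_const_nhds.sub (tendsto_inv_atTop_zero.const_mul (s * a))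
  have hrhs : Tendsto (fun t => f t / t - f a * t⁻¹) atTop (𝓝 L) := by
    simpa using hL.sub (tendsto_inv_atTop_zero.const_mul (f a))
  have hs : s ≤ L := le_of_tendsto_of_tendsto hlhs hrhs <| by
    filter_upwards [eventually_gt_atTop (max b 0)] with t ht
    have ht0 : 0 < t := (le_max_right _ _).trans_lt ht
    have := hsecant t ((le_max_left _ _).trans_lt ht)
    rw [← sub_nonneg] at this ⊢
    convert div_nonneg this ht0.le using 1
    field_simp
  calc f b - f a = s * (b - a) := (div_mul_cancel₀ _ (sub_pos.2 hab).ne').symm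
    _ ≤ L * (b - a) := by gcongr

theorem ConvexOn.abs_sub_le_of_tendsto_div_atTop {f : ℝ → ℝ} {L : ℝ}
    (hf : ConvexOn ℝ univ f) (hplus : Tendsto (fun t => f t / t) atTop (𝓝 L))
    (hminus : Tendsto (fun t => f (-t) / t) atTop (𝓝 L)) (a b : ℝ) :
    |f b - f a| ≤ L * |b - a| := by
  have hneg : ConvexOn ℝ univ (fun t => f (-t)) := hf.comp_linearMap (-LinearMap.id)
  have hle : ∀ a b, a ≤ b → |f b - f a| ≤ L * (b - a) := fun a b hab => by
    have h1 := hf.sub_le_mul_sub_of_tendsto_div_atTop hplus hab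
    have h2 := hneg.sub_le_mul_sub_of_tendsto_div_atTop hminus (neg_le_neg hab)
    simp only [neg_neg] at h2
    exact abs_le.2 ⟨by linarith, h1⟩
  rcases le_total a b with hab | hab
  · rw [abs_of_nonneg (sub_nonneg.2 hab)]; exact hle a b hab
  · rw [abs_sub_comm, abs_sub_comm b, abs_of_nonneg (sub_nonneg.2 hab)]; exact hle b a hab

theorem nonneg_of_forall_abs_sub_le {W : ℝ → ℝ} {L : ℝ}
    (h : ∀ a b, |W b - W a| ≤ L * |b - a|) : 0 ≤ L := by
  have h01 := h 0 1
  rw [sub_zero, abs_one, mul_one] at h01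
  exact (abs_nonneg _).trans h01

theorem lipschitzWith_of_abs_sub_le {W : ℝ → ℝ} {L : ℝ}
    (h : ∀ a b, |W b - W a| ≤ L * |b - a|) : LipschitzWith L.toNNReal W :=
  LipschitzWith.of_dist_le' fun a b => by simpa only [Real.dist_eq] using h b a

theorem LipschitzWith.integrable_comp {α : Type*} [MeasurableSpace α] {μ : Measure α}
    [IsFiniteMeasure μ] {K : NNReal} {W : ℝ → ℝ} (hW : LipschitzWith K W) {f : α → ℝ}
    (hf : Integrable f μ) : Integrable (fun x => W (f x)) μ := by
  refine ((hf.norm.const_mul K).add (integrable_const ‖W 0‖)).mono'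
    (hW.continuous.comp_aestronglyMeasurable hf.1) (Eventually.of_forall fun x => ?_)
  have := hW.dist_le_mul (f x) 0
  rw [dist_eq_norm, dist_eq_norm, sub_zero] at this
  simp only [Pi.add_apply]
  linarith [norm_sub_norm_le (W (f x)) (W 0)]

theorem LipschitzWith.intervalIntegrable_comp {K : NNReal} {W : ℝ → ℝ}
    (hW : LipschitzWith K W) {f : ℝ → ℝ} {a b : ℝ} (hf : IntervalIntegrable f volume a b) :
    IntervalIntegrable (fun x => W (f x)) volume a b := by
  rw [intervalIntegrable_iff] at hf ⊢
  have : IsFiniteMeasure (volume.restrict (uIoc a b)) :=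
    isFiniteMeasure_restrict.2 measure_Ioc_lt_top.ne
  exact hW.integrable_comp hf

theorem locallyIntegrable_of_forall_intervalIntegrable {f : ℝ → ℝ}
    (hf : ∀ a b, IntervalIntegrable f volume a b) : LocallyIntegrable f volume := fun x =>
  ⟨Icc (x - 1) (x + 1), Icc_mem_nhds (by linarith) (by linarith),
    (intervalIntegrable_iff_integrableOn_Icc_of_le (by linarith)).1 (hf _ _)⟩

theorem MeasureTheory.LocallyIntegrable.intervalIntegrable {f : ℝ → ℝ}
    (hf : LocallyIntegrable f volume) (a b : ℝ) : IntervalIntegrable f volume a b :=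
  (hf.integrableOn_isCompact isCompact_uIcc).intervalIntegrable

theorem Function.Periodic.locallyIntegrable {f : ℝ → ℝ} (hf : Periodic f 1)
    (hint : IntegrableOn f (Icc 0 1)) : LocallyIntegrable f volume :=
  locallyIntegrable_of_forall_intervalIntegrable <| hf.intervalIntegrable₀ one_ne_zero <|
    (intervalIntegrable_iff_integrableOn_Icc_of_le zero_le_one).2 hint

theorem interval_average_add_eq (f : ℝ → ℝ) (x ε : ℝ) :
    ⨍ t in x..x + ε, f t = ε⁻¹ * ∫ t in x..x + ε, f t := by
  rw [interval_average_eq, add_sub_cancel_left, smul_eq_mul]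

theorem MeasureTheory.LocallyIntegrable.interval_average_add_eq_primitive_sub {f : ℝ → ℝ}
    (hf : LocallyIntegrable f volume) (x ε : ℝ) :
    ⨍ t in x..x + ε, f t = ε⁻¹ * ((∫ t in 0..x + ε, f t) - ∫ t in 0..x, f t) := by
  rw [interval_average_add_eq, intervalIntegral.integral_interval_sub_left
    (hf.intervalIntegrable _ _) (hf.intervalIntegrable _ _)]

theorem MeasureTheory.LocallyIntegrable.continuous_interval_average {f : ℝ → ℝ}
    (hf : LocallyIntegrable f volume) (ε : ℝ) : Continuous fun x => ⨍ t in x..x + ε, f t := by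
  have hprim := intervalIntegral.continuous_primitive hf.intervalIntegrable 0
  simp only [hf.interval_average_add_eq_primitive_sub]
  fun_prop

theorem abs_interval_average_le {f : ℝ → ℝ} {M : ℝ} (hf : ∀ x, |f x| ≤ M) (a b : ℝ) :
    |⨍ t in a..b, f t| ≤ M := by
  have hM : 0 ≤ M := (abs_nonneg _).trans (hf 0)
  rw [interval_average_eq, smul_eq_mul, abs_mul, abs_inv]
  rcases eq_or_ne a b with rfl | hab
  · simpa using hM
  rw [inv_mul_le_iff₀ (abs_pos.2 (sub_ne_zero.2 hab.symm))]
  simpa [mul_comm] using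
    intervalIntegral.norm_integral_le_of_norm_le_const (f := f) (fun x _ => hf x)

theorem MeasureTheory.LocallyIntegrable.ae_tendsto_interval_average {f : ℝ → ℝ}
    (hf : LocallyIntegrable f volume) :
    ∀ᵐ x, Tendsto (fun ε => ⨍ t in x..x + ε, f t) (𝓝[≠] 0) (𝓝 (f x)) := by
  filter_upwards [LocallyIntegrable.ae_hasDerivAt_integral hf] with x hx
  have := hasDerivAt_iff_tendsto_slope_zero.1 (hx 0)
  simpa only [smul_eq_mul, ← hf.interval_average_add_eq_primitive_sub] using this

theorem integral_sub_comp_add_eq_of_add_one {Ψ : ℝ → ℝ} {c : ℝ}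
    (hΨ : ∀ x, Ψ (x + 1) = Ψ x + c) (hint : ∀ a b, IntervalIntegrable Ψ volume a b)
    (ε : ℝ) :
    ∫ x in 0..1, (Ψ (x + ε) - Ψ x) = ε * c := by
  have hshift : ∀ a b d, IntervalIntegrable (fun x => Ψ (x + d)) volume a b := fun a b d => by
    simpa using (hint (a + d) (b + d)).comp_add_right d
  calc ∫ x in 0..1, (Ψ (x + ε) - Ψ x)
      = (∫ x in ε..1 + ε, Ψ x) - ∫ x in 0..1, Ψ x := by
        rw [intervalIntegral.integral_sub (hshift _ _ _) (hint _ _),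
          intervalIntegral.integral_comp_add_right, zero_add]
    _ = (∫ x in 0..ε, Ψ (x + 1)) - ∫ x in 0..ε, Ψ x := by
        rw [intervalIntegral.integral_comp_add_right, zero_add, add_comm ε 1,
          ← intervalIntegral.integral_add_adjacent_intervals (hint 0 ε) (hint ε 1),
          ← intervalIntegral.integral_add_adjacent_intervals (hint ε 1) (hint 1 (1 + ε))]
        ring
    _ = ε * c := by
        rw [← intervalIntegral.integral_sub (hshift _ _ _) (hint _ _)]
        simp [hΨ]

theorem Function.Periodic.integral_interval_average {φ : ℝ → ℝ} (hφ : Periodic φ 1)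
    (hint : LocallyIntegrable φ volume) {ε : ℝ} (hε : ε ≠ 0) :
    ∫ x in 0..1, ⨍ t in x..x + ε, φ t = ∫ x in 0..1, φ x := by
  have hΨ : ∀ x, (∫ t in 0..x + 1, φ t) = (∫ t in 0..x, φ t) + ∫ t in 0..1, φ t := by
    intro x
    rw [← intervalIntegral.integral_add_adjacent_intervals (hint.intervalIntegrable 0 x)
      (hint.intervalIntegrable x (x + 1)), hφ.intervalIntegral_add_eq x 0, zero_add]
  simp only [hint.interval_average_add_eq_primitive_sub]
  rw [intervalIntegral.integral_const_mul, integral_sub_comp_add_eq_of_add_one hΨ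
    (intervalIntegral.continuous_primitive hint.intervalIntegrable 0).intervalIntegrable,
    inv_mul_cancel_left₀ hε]

theorem ConvexOn.map_interval_average_le {W : ℝ → ℝ} (hW : ConvexOn ℝ univ W)
    (hWc : Continuous W) {f : ℝ → ℝ} {a b : ℝ} (hab : a ≠ b)
    (hf : IntervalIntegrable f volume a b)
    (hWf : IntervalIntegrable (fun x => W (f x)) volume a b) :
    W (⨍ t in a..b, f t) ≤ ⨍ t in a..b, W (f t) :=
  hW.map_set_average_le hWc.continuousOn isClosed_univ (by simp [sub_eq_zero, hab.symm])
    (by simp) (by simp) hf.def' hWf.def'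

theorem ConvexOn.map_mul_le_interval_average_add {W : ℝ → ℝ} {L : ℝ}
    (hW : ConvexOn ℝ univ W) (hlip : ∀ a b, |W b - W a| ≤ L * |b - a|) {v : ℝ → ℝ}
    (hv : LocallyIntegrable v volume)
    {x ε : ℝ} (hε : 0 < ε) (δ : ℝ) :
    W (ε⁻¹ * δ) ≤
      (⨍ t in x..x + ε, W (v t)) + L * (ε⁻¹ * |δ - ∫ t in x..x + ε, v t|) := by
  have hL := lipschitzWith_of_abs_sub_le hlip
  have hjensen := hW.map_interval_average_le hL.continuous (by linarith : x ≠ x + ε)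
    (hv.intervalIntegrable _ _) (hL.intervalIntegrable_comp (hv.intervalIntegrable _ _))
  rw [interval_average_add_eq v] at hjensen
  have hclose := hlip (ε⁻¹ * ∫ t in x..x + ε, v t) (ε⁻¹ * δ)
  rw [← mul_sub, abs_mul, abs_inv, abs_of_pos hε] at hclose
  linarith [(le_abs_self _).trans hclose]

theorem IntervalIntegrable.absolutelyContinuousOnInterval_const_add_integral {F : ℝ → ℝ}
    {a b : ℝ} (hF : IntervalIntegrable F volume a b) (c : ℝ) :
    AbsolutelyContinuousOnInterval (fun x => c + ∫ t in a..x, F t) a b :=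
  (LipschitzWith.const c).lipschitzOnWith.absolutelyContinuousOnInterval.fun_add
    (hF.absolutelyContinuousOnInterval_intervalIntegral left_mem_uIcc)

theorem IntervalIntegrable.ae_deriv_const_add_integral {F : ℝ → ℝ} {a b : ℝ}
    (hF : IntervalIntegrable F volume a b) (c : ℝ) :
    ∀ᵐ x, x ∈ uIcc a b → deriv (fun x => c + ∫ t in a..x, F t) x = F x := by
  filter_upwards [hF.ae_hasDerivAt_integral] with x hx hxab
  exact ((hx hxab a left_mem_uIcc).const_add c).deriv

theorem integral_mul_eq_sub_integral_mul_of_primitive {f F g G : ℝ → ℝ} {a b : ℝ}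
    (hF : IntervalIntegrable F volume a b) (hG : IntervalIntegrable G volume a b)
    (hf : ∀ x ∈ uIcc a b, f x = f a + ∫ t in a..x, F t)
    (hg : ∀ x ∈ uIcc a b, g x = g a + ∫ t in a..x, G t) :
    ∫ x in a..b, f x * G x = f b * g b - f a * g a - ∫ x in a..b, F x * g x := by
  set f' := fun x => f a + ∫ t in a..x, F t
  set g' := fun x => g a + ∫ t in a..x, G t
  have hfg := AbsolutelyContinuousOnInterval.integral_mul_deriv_eq_deriv_mul
    (hF.absolutelyContinuousOnInterval_const_add_integral (f a))
    (hG.absolutelyContinuousOnInterval_const_add_integral (g a))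
  have hleft : ∫ x in a..b, f x * G x = ∫ x in a..b, f' x * deriv g' x := by
    refine intervalIntegral.integral_congr_ae ?_
    filter_upwards [hG.ae_deriv_const_add_integral (g a)] with x hx hxab
    rw [hx (uIoc_subset_uIcc hxab), hf x (uIoc_subset_uIcc hxab)]
  have hright : ∫ x in a..b, F x * g x = ∫ x in a..b, deriv f' x * g' x := by
    refine intervalIntegral.integral_congr_ae ?_
    filter_upwards [hF.ae_deriv_const_add_integral (f a)] with x hx hxab
    rw [hx (uIoc_subset_uIcc hxab), hg x (uIoc_subset_uIcc hxab)]
  rw [hleft, hright, hfg, ← hf b right_mem_uIcc, ← hg b right_mem_uIcc, ← hf a left_mem_uIcc,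
    ← hg a left_mem_uIcc]

theorem IsW11Per.locallyIntegrable_deriv {w wx : ℝ → ℝ} (h : IsW11Per w wx) :
    LocallyIntegrable wx volume :=
  h.2.1.locallyIntegrable h.2.2.1

theorem IsW11Per.continuous {w wx : ℝ → ℝ} (h : IsW11Per w wx) : Continuous w :=
  (continuous_const.add (intervalIntegral.continuous_primitive
    h.locallyIntegrable_deriv.intervalIntegrable 0)).congr fun x => (h.2.2.2 x).symm

theorem IsW11Per.sub {v vx w wx : ℝ → ℝ} (hv : IsW11Per v vx) (hw : IsW11Per w wx) :
    IsW11Per (v - w) (vx - wx) := by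
  refine ⟨hv.1.sub hw.1, hv.2.1.sub hw.2.1, hv.2.2.1.sub hw.2.2.1, fun x => ?_⟩
  simp only [Pi.sub_apply]
  rw [intervalIntegral.integral_sub (hv.locallyIntegrable_deriv.intervalIntegrable _ _)
    (hw.locallyIntegrable_deriv.intervalIntegrable _ _), hv.2.2.2 x, hw.2.2.2 x]
  ring

theorem IsW11Per.integral_mul_deriv {ξ ξx v vx : ℝ → ℝ}
    (hξx : IntervalIntegrable ξx volume 0 1)
    (hξ : ∀ x ∈ uIcc 0 1, ξ x = ξ 0 + ∫ t in 0..x, ξx t)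
    (hξ1 : ξ 1 = ξ 0) (hv : IsW11Per v vx) :
    ∫ x in 0..1, ξ x * vx x = -∫ x in 0..1, ξx x * v x := by
  rw [integral_mul_eq_sub_integral_mul_of_primitive hξx
    (hv.locallyIntegrable_deriv.intervalIntegrable 0 1) hξ (fun x _ => hv.2.2.2 x), hξ1, hv.1.eq]
  ring

theorem isW11Per_interval_average {w : ℝ → ℝ} (hper : Periodic w 1)
    (hint : IntegrableOn w (Icc 0 1)) (ε : ℝ) :
    IsW11Per (fun x => ⨍ t in x..x + ε, w t) (fun x => ε⁻¹ * (w (x + ε) - w x)) := by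
  have hloc := hper.locallyIntegrable hint
  have hshift : LocallyIntegrable (fun x => w (x + ε)) volume :=
    locallyIntegrable_of_forall_intervalIntegrable fun a b => by
      simpa using (hloc.intervalIntegrable (a + ε) (b + ε)).comp_add_right ε
  refine ⟨fun x => ?_, fun x => ?_, ?_, fun x => ?_⟩
  · show ⨍ t in (x + 1)..(x + 1) + ε, w t = ⨍ t in x..x + ε, w t
    rw [interval_average_add_eq, interval_average_add_eq, add_right_comm x 1 ε,
      ← intervalIntegral.integral_comp_add_right]
    simp only [hper _]
  · simp [add_right_comm x 1 ε, hper _]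
  · exact ((hshift.sub hloc).integrableOn_isCompact isCompact_Icc).const_mul _
  · beta_reduce
    rw [hloc.interval_average_add_eq_primitive_sub, hloc.interval_average_add_eq_primitive_sub,
      zero_add, intervalIntegral.integral_same, intervalIntegral.integral_const_mul,
      intervalIntegral.integral_sub (hshift.intervalIntegrable _ _) (hloc.intervalIntegrable _ _),
      intervalIntegral.integral_comp_add_right, zero_add,
      ← intervalIntegral.integral_add_adjacent_intervals (hloc.intervalIntegrable 0 ε)
        (hloc.intervalIntegrable ε (x + ε))]
    ring

noncomputable def quasiPeriodicExtension (G : ℝ → ℝ) (t : ℝ) : ℝ :=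
  G (Int.fract t) + ⌊t⌋ * G 1

theorem quasiPeriodicExtension_add_one (G : ℝ → ℝ) (t : ℝ) :
    quasiPeriodicExtension G (t + 1) = quasiPeriodicExtension G t + G 1 := by
  simp only [quasiPeriodicExtension, Int.fract_add_one, Int.floor_add_one, Int.cast_add,
    Int.cast_one]
  ring

theorem quasiPeriodicExtension_eq_of_mem_Icc {G : ℝ → ℝ} (hG0 : G 0 = 0) {t : ℝ}
    (ht : t ∈ Icc 0 1) : quasiPeriodicExtension G t = G t := by
  rcases ht.2.eq_or_lt with rfl | ht1
  · simp [quasiPeriodicExtension, hG0]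
  · simp [quasiPeriodicExtension, Int.fract_eq_self.2 ⟨ht.1, ht1⟩,
      Int.floor_eq_zero_iff.2 ⟨ht.1, ht1⟩]

theorem monotone_quasiPeriodicExtension {G : ℝ → ℝ} (hG : MonotoneOn G (Icc 0 1))
    (hG0 : G 0 = 0) : Monotone (quasiPeriodicExtension G) := by
  intro s t hst
  have hfract : ∀ r, Int.fract r ∈ Icc (0 : ℝ) 1 :=
    fun r => ⟨Int.fract_nonneg r, (Int.fract_lt_one r).le⟩
  have hbound : ∀ r, 0 ≤ G (Int.fract r) ∧ G (Int.fract r) ≤ G 1 := fun r =>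
    ⟨hG0 ▸ hG ⟨le_rfl, zero_le_one⟩ (hfract r) (hfract r).1,
      hG (hfract r) ⟨zero_le_one, le_rfl⟩ (hfract r).2⟩
  unfold quasiPeriodicExtension
  rcases (Int.floor_mono hst).eq_or_lt with h | h
  · have : Int.fract s ≤ Int.fract t := by
      rw [Int.fract, Int.fract, h]; linarith
    rw [h]
    gcongr
    exact hG (hfract s) (hfract t) this
  · have h' : (⌊s⌋ : ℝ) + 1 ≤ ⌊t⌋ := by exact_mod_cast h
    nlinarith [hbound s, hbound t, (hbound 0).1.trans (hbound 0).2]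

theorem abs_sub_le_sub_of_add_one {h g : ℝ → ℝ} {c d : ℝ} (hh : ∀ t, h (t + 1) = h t + c)
    (hg : ∀ t, g (t + 1) = g t + d)
    (hhg : ∀ s t, 0 ≤ s → s ≤ t → t ≤ 1 → |h t - h s| ≤ g t - g s)
    {s t : ℝ} (hs0 : 0 ≤ s) (hs1 : s ≤ 1) (hst : s ≤ t) (ht : t ≤ s + 1) :
    |h t - h s| ≤ g t - g s := by
  rcases le_total t 1 with ht1 | ht1
  · exact hhg s t hs0 hst ht1
  have hc := hh 0
  have hd := hg 0
  have ht' := hh (t - 1)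
  have hg' := hg (t - 1)
  rw [zero_add] at hc hd
  rw [sub_add_cancel] at ht' hg'
  calc |h t - h s| = |(h (t - 1) - h 0) + (h 1 - h s)| := by congr 1; linarith
    _ ≤ |h (t - 1) - h 0| + |h 1 - h s| := abs_add_le _ _
    _ ≤ (g (t - 1) - g 0) + (g 1 - g s) :=
        add_le_add (hhg 0 _ le_rfl (by linarith) (by linarith)) (hhg s 1 hs0 hs1 le_rfl)
    _ = g t - g s := by linarith

theorem ae_restrict_Icc_comp_fract_eq (f : ℝ → ℝ) :
    (fun t => f (Int.fract t)) =ᵐ[volume.restrict (Icc 0 1)] f := by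
  have hne : ∀ᵐ t : ℝ, t ≠ 1 := by simp [ae_iff, measure_singleton]
  filter_upwards [ae_restrict_mem measurableSet_Icc, ae_restrict_of_ae hne] with t ht ht1
  rw [Int.fract_eq_self.2 ⟨ht.1, lt_of_le_of_ne ht.2 ht1⟩]

theorem integral_comp_fract_eq {f : ℝ → ℝ} {x : ℝ} (hx : x ∈ Icc (0 : ℝ) 1) :
    ∫ t in 0..x, f (Int.fract t) = ∫ t in 0..x, f t := by
  refine intervalIntegral.integral_congr_ae_restrict
    (ae_restrict_of_ae_restrict_of_subset ?_ (ae_restrict_Icc_comp_fract_eq f))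
  rw [uIoc_of_le hx.1]
  exact Ioc_subset_Icc_self.trans (Icc_subset_Icc_right hx.2)

theorem MeasureTheory.IntegrableOn.locallyIntegrable_comp_fract {f : ℝ → ℝ}
    (hf : IntegrableOn f (Icc 0 1)) : LocallyIntegrable (fun t => f (Int.fract t)) volume :=
  ((Int.fract_periodic ℝ).comp f).locallyIntegrable
    (hf.congr (ae_restrict_Icc_comp_fract_eq f).symm)

theorem abs_sub_sub_integral_comp_fract_le {w wx : ℝ → ℝ} {ν : SignedMeasure ℝ}
    (hwper : Periodic w 1) (hwx : IntegrableOn wx (Icc 0 1))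
    (hrep : ∀ x ∈ Icc (0 : ℝ) 1, w x = w 0 + (∫ t in (0 : ℝ)..x, wx t) + ν (Ioc 0 x))
    {s t : ℝ} (hs : s ∈ Icc (0 : ℝ) 1) (hst : s ≤ t) (ht : t ≤ s + 1) :
    |w t - w s - ∫ r in s..t, wx (Int.fract r)| ≤
      quasiPeriodicExtension (fun r => ν.totalVariation.real (Ioc 0 r)) t -
        quasiPeriodicExtension (fun r => ν.totalVariation.real (Ioc 0 r)) s := by
  set v := fun r => wx (Int.fract r)
  have hvper : Periodic v 1 := (Int.fract_periodic ℝ).comp wx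
  have hvloc : LocallyIntegrable v volume := hwx.locallyIntegrable_comp_fract
  set G := fun r => ν.totalVariation.real (Ioc 0 r)
  have hG0 : G 0 = 0 := by simp [G]
  -- `h` is the singular part of `w`: on `[0, 1]` its increments are those of `ν`
  set h := fun r => w r - ∫ q in 0..r, v q
  have hh : ∀ r, h (r + 1) = h r + -∫ q in 0..1, v q := fun r => by
    simp only [h, hwper r]
    rw [← intervalIntegral.integral_add_adjacent_intervals (hvloc.intervalIntegrable 0 r)
      (hvloc.intervalIntegrable r (r + 1)), hvper.intervalIntegral_add_eq r 0, zero_add]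
    ring
  have hincr : ∀ a b, 0 ≤ a → a ≤ b → b ≤ 1 → |h b - h a| ≤ G b - G a := by
    intro a b ha hab hb
    have hνab : ν (Ioc 0 b) = ν (Ioc 0 a) + ν (Ioc a b) := by
      rw [← Ioc_union_Ioc_eq_Ioc ha hab]
      exact VectorMeasure.of_union (Ioc_disjoint_Ioc_of_le le_rfl) measurableSet_Ioc
        measurableSet_Ioc
    have hGab : G b = G a + ν.totalVariation.real (Ioc a b) := by
      simp only [G]
      rw [← Ioc_union_Ioc_eq_Ioc ha hab,
        measureReal_union (Ioc_disjoint_Ioc_of_le le_rfl) measurableSet_Ioc]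
    have hhab : h b - h a = ν (Ioc a b) := by
      simp only [h, v]
      rw [integral_comp_fract_eq ⟨ha.trans hab, hb⟩,
        integral_comp_fract_eq ⟨ha, hab.trans hb⟩,
        hrep b ⟨ha.trans hab, hb⟩, hrep a ⟨ha, hab.trans hb⟩]
      linarith
    rw [hhab, hGab, add_sub_cancel_left]
    exact ν.norm_le_totalVariation _
  have := abs_sub_le_sub_of_add_one hh (quasiPeriodicExtension_add_one G)
    (fun a b ha hab hb => by
      rw [quasiPeriodicExtension_eq_of_mem_Icc hG0 ⟨ha, hab.trans hb⟩,
        quasiPeriodicExtension_eq_of_mem_Icc hG0 ⟨ha.trans hab, hb⟩]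
      exact hincr a b ha hab hb) hs.1 hs.2 hst ht
  convert this using 2
  rw [← intervalIntegral.integral_interval_sub_left (hvloc.intervalIntegrable 0 t)
    (hvloc.intervalIntegrable 0 s)]
  ring

theorem integral_comp_forward_diff_le {W : ℝ → ℝ} {L : ℝ} (hW : ConvexOn ℝ univ W)
    (hlip : ∀ a b, |W b - W a| ≤ L * |b - a|) {w wx : ℝ → ℝ} {ν : SignedMeasure ℝ}
    (hwper : Periodic w 1) (hw : IntegrableOn w (Icc 0 1)) (hwx : IntegrableOn wx (Icc 0 1))
    (hrep : ∀ x ∈ Icc (0 : ℝ) 1, w x = w 0 + (∫ t in (0 : ℝ)..x, wx t) + ν (Ioc 0 x))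
    {ε : ℝ} (hε0 : 0 < ε) (hε1 : ε ≤ 1) :
    ∫ x in 0..1, W (ε⁻¹ * (w (x + ε) - w x)) ≤
      (∫ x in 0..1, W (wx x)) + L * ν.totalVariation.real (Ioc 0 1) := by
  set v := fun r => wx (Int.fract r)
  have hvper : Periodic v 1 := (Int.fract_periodic ℝ).comp wx
  have hvloc : LocallyIntegrable v volume := hwx.locallyIntegrable_comp_fract
  have hL := lipschitzWith_of_abs_sub_le hlip
  have hL0 := nonneg_of_forall_abs_sub_le hlip
  have hWv : LocallyIntegrable (fun t => W (v t)) volume :=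
    locallyIntegrable_of_forall_intervalIntegrable fun a b =>
      hL.intervalIntegrable_comp (hvloc.intervalIntegrable a b)
  -- `E (x + ε) - E x` is the `|ν|`-mass of the window `(x, x + ε]` wrapped around the circle
  set E := quasiPeriodicExtension (fun r => ν.totalVariation.real (Ioc 0 r))
  have hE : Monotone E := monotone_quasiPeriodicExtension
    (fun a _ b _ hab => measureReal_mono (Ioc_subset_Ioc_right hab)) (by simp)
  have hpt : ∀ x ∈ Icc (0 : ℝ) 1, W (ε⁻¹ * (w (x + ε) - w x)) ≤
      (⨍ t in x..x + ε, W (v t)) + L * ε⁻¹ * (E (x + ε) - E x) := by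
    intro x hx
    refine (hW.map_mul_le_interval_average_add hlip hvloc (x := x) hε0 _).trans ?_
    rw [mul_assoc]
    gcongr
    exact abs_sub_sub_integral_comp_fract_le hwper hwx hrep hx (by linarith) (by linarith)
  have hdiff : IntervalIntegrable (fun x => ε⁻¹ * (w (x + ε) - w x)) volume 0 1 :=
    (isW11Per_interval_average hwper hw ε).locallyIntegrable_deriv.intervalIntegrable 0 1
  have hEint : IntervalIntegrable (fun x => E (x + ε) - E x) volume 0 1 :=
    ((hE.comp (monotone_id.add_const ε)).intervalIntegrable).sub hE.intervalIntegrable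
  calc ∫ x in 0..1, W (ε⁻¹ * (w (x + ε) - w x))
      ≤ ∫ x in 0..1, ((⨍ t in x..x + ε, W (v t)) + L * ε⁻¹ * (E (x + ε) - E x)) :=
        intervalIntegral.integral_mono_on zero_le_one (hL.intervalIntegrable_comp hdiff)
          (((hWv.continuous_interval_average ε).intervalIntegrable 0 1).add
            (hEint.const_mul _)) hpt
    _ = (∫ x in 0..1, W (v x)) + L * ε⁻¹ * (ε * ν.totalVariation.real (Ioc 0 1)) := by
        rw [intervalIntegral.integral_add
          ((hWv.continuous_interval_average ε).intervalIntegrable 0 1)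
          (hEint.const_mul _), intervalIntegral.integral_const_mul,
          (show Periodic (fun t => W (v t)) 1 from hvper.comp W).integral_interval_average hWv
            hε0.ne',
          integral_sub_comp_add_eq_of_add_one (quasiPeriodicExtension_add_one _)
            (fun a b => hE.intervalIntegrable)]
    _ = (∫ x in 0..1, W (wx x)) + L * ν.totalVariation.real (Ioc 0 1) := by
        rw [integral_comp_fract_eq (f := fun t => W (wx t)) ⟨zero_le_one, le_rfl⟩]
        field_simp

theorem exists_forall_abs_le_of_periodic {w wx : ℝ → ℝ} {ν : SignedMeasure ℝ}
    (hwper : Periodic w 1) (hwx : IntegrableOn wx (Icc 0 1))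
    (hrep : ∀ x ∈ Icc (0 : ℝ) 1, w x = w 0 + (∫ t in (0 : ℝ)..x, wx t) + ν (Ioc 0 x)) :
    ∃ M, ∀ x, |w x| ≤ M := by
  refine ⟨|w 0| + (∫ t in Icc 0 1, |wx t|) + ν.totalVariation.real univ, fun x => ?_⟩
  obtain ⟨y, hy, hxy⟩ := hwper.exists_mem_Ico₀ one_pos x
  rw [hxy, hrep y (Ico_subset_Icc_self hy)]
  have hac : |∫ t in 0..y, wx t| ≤ ∫ t in Icc 0 1, |wx t| := by
    rw [intervalIntegral.integral_of_le hy.1]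
    exact abs_integral_le_integral_abs.trans <| setIntegral_mono_set hwx.abs
      (Eventually.of_forall fun t => abs_nonneg _)
      (Ioc_subset_Icc_self.trans (Icc_subset_Icc_right hy.2.le)).eventuallyLE
  have hsing : |ν (Ioc 0 y)| ≤ ν.totalVariation.real univ :=
    (ν.norm_le_totalVariation _).trans (measureReal_mono (subset_univ _))
  exact (abs_add_three _ _ _).trans (by linarith)

theorem tendsto_integral_mul_interval_average_sub {g w v : ℝ → ℝ} {M a b : ℝ}
    (hg : IntervalIntegrable g volume a b) (hw : LocallyIntegrable w volume)
    (hwM : ∀ x, |w x| ≤ M) (hv : ContinuousOn v (uIcc a b)) :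
    Tendsto (fun ε => ∫ x in a..b, g x * ((⨍ t in x..x + ε, w t) - v x)) (𝓝[>] 0)
      (𝓝 (∫ x in a..b, g x * (w x - v x))) := by
  obtain ⟨C, hC⟩ := isCompact_uIcc.exists_bound_of_continuousOn hv
  have hvm : AEStronglyMeasurable v (volume.restrict (uIoc a b)) :=
    (hv.mono uIoc_subset_uIcc).aestronglyMeasurable measurableSet_uIoc
  refine intervalIntegral.tendsto_integral_filter_of_dominated_convergence
    (fun x => |g x| * (M + C)) (Eventually.of_forall fun ε => ?_)
    (Eventually.of_forall fun ε => Eventually.of_forall fun x hx => ?_)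
    (hg.abs.mul_const _) ?_
  · exact hg.def'.1.mul (((hw.continuous_interval_average ε).aestronglyMeasurable).sub hvm)
  · rw [norm_mul, Real.norm_eq_abs]
    gcongr
    exact (abs_sub _ _).trans (add_le_add (abs_interval_average_le hwM _ _)
      (hC x (uIoc_subset_uIcc hx)))
  · filter_upwards [hw.ae_tendsto_interval_average] with x hx _
    exact ((hx.mono_left (nhdsWithin_mono _ fun ε hε => ne_of_gt hε)).sub_const _).const_mul _

theorem neg_xi_x_in_relaxed_subdifferential_general
    (W : ℝ → ℝ) (hWconv : ConvexOn ℝ Set.univ W)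
    (Winf : ℝ)
    (hWplus : Tendsto (fun t : ℝ => W t / t) atTop (𝓝 Winf))
    (hWminus : Tendsto (fun t : ℝ => W (-t) / t) atTop (𝓝 Winf))
    (u ux : ℝ → ℝ) (hu : IsW11Per u ux)
    (ξ ξx : ℝ → ℝ) (hξper : Function.Periodic ξ 1)
    (hξL2 : MemLp ξx 2 (volume.restrict (Set.Icc (0:ℝ) 1)))
    (hξprim : ∀ x : ℝ, ξ x = ξ 0 + ∫ t in (0:ℝ)..x, ξx t)
    (hineq : ∀ w wx : ℝ → ℝ, IsW11Per w wx →
      (∫ x in Set.Icc (0:ℝ) 1, ξ x * (wx x - ux x)) ≤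
        (∫ x in Set.Icc (0:ℝ) 1, W (wx x)) - ∫ x in Set.Icc (0:ℝ) 1, W (ux x)) :
    -- conclusion: for every `w ∈ BV(𝕋)` with `Dw = wx·L¹ + νs`, `νs ⟂ L¹`,
    ∀ (w wx : ℝ → ℝ) (νs : SignedMeasure ℝ),
      Function.Periodic w 1 → IntegrableOn wx (Set.Icc 0 1) →
      νs.totalVariation ⟂ₘ volume →
      (∀ x ∈ Set.Icc (0:ℝ) 1, w x = w 0 + (∫ t in (0:ℝ)..x, wx t) + νs (Set.Ioc 0 x)) →
      IntegrableOn w (Set.Icc 0 1) →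
      ((∫ x in Set.Icc (0:ℝ) 1, W (wx x)) + Winf * (νs.totalVariation (Set.Icc 0 1)).toReal)
          - (∫ x in Set.Icc (0:ℝ) 1, W (ux x)) ≥
        -∫ x in Set.Icc (0:ℝ) 1, ξx x * (w x - u x) := by
  intro w wx νs hwper hwx _ hrep hw
  simp only [integral_Icc_eq_integral_Ioc, ← intervalIntegral.integral_of_le zero_le_one]
    at hineq ⊢
  have hξx : IntervalIntegrable ξx volume 0 1 :=
    (intervalIntegrable_iff_integrableOn_Icc_of_le zero_le_one).2 (hξL2.integrable one_le_two)
  have hlip := hWconv.abs_sub_le_of_tendsto_div_atTop hWplus hWminus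
  have hcompetitor : ∀ ε ∈ Ioo (0 : ℝ) 1,
      -∫ x in 0..1, ξx x * ((⨍ t in x..x + ε, w t) - u x) ≤
        (∫ x in 0..1, W (wx x)) + Winf * νs.totalVariation.real (Ioc 0 1) -
          ∫ x in 0..1, W (ux x) := by
    rintro ε ⟨hε0, hε1⟩
    have hv := isW11Per_interval_average hwper hw ε
    have hparts := (hv.sub hu).integral_mul_deriv hξx (fun x _ => hξprim x)
      (by simpa using hξper 0)
    simp only [Pi.sub_apply] at hparts
    linarith [hineq _ _ hv,
      integral_comp_forward_diff_le hWconv hlip hwper hw hwx hrep hε0 hε1.le]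
  obtain ⟨M, hM⟩ := exists_forall_abs_le_of_periodic hwper hwx hrep
  have hlim := (tendsto_integral_mul_interval_average_sub hξx (hwper.locallyIntegrable hw) hM
    hu.continuous.continuousOn).neg
  have hTV : νs.totalVariation.real (Ioc 0 1) ≤ (νs.totalVariation (Icc 0 1)).toReal :=
    measureReal_mono Ioc_subset_Icc_self
  have := mul_le_mul_of_nonneg_left hTV (nonneg_of_forall_abs_sub_le hlip)
  linarith [le_of_tendsto hlim (eventually_of_mem (Ioo_mem_nhdsGT one_pos) hcompetitor)]

/-- If `ξ ∈ W^{1,2}(𝕋)` takes values in `[-W^∞, W^∞]` and satisfies the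
subgradient inequality for the energy `∫ W(w_x)` against all `w ∈ W^{1,1}(𝕋)`,
then `-ξ_x` belongs to the subdifferential of the relaxed energy
`Ē(w) = ∫ W(w_x) + W^∞ |D^s w|(𝕋)` at `u`: for every BV function `w`, written
via the Lebesgue decomposition `Dw = w_x·L¹ + D^s w` of its derivative measure,
one has `Ē(w) - Ē(u) ≥ -∫ ξ_x (w - u)`. -/
theorem neg_xi_x_in_relaxed_subdifferential
    (W : ℝ → ℝ) (hWconv : ConvexOn ℝ Set.univ W)
    (Winf : ℝ)
    (hWplus : Tendsto (fun t : ℝ => W t / t) atTop (𝓝 Winf))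
    (hWminus : Tendsto (fun t : ℝ => W (-t) / t) atTop (𝓝 Winf))
    (u ux : ℝ → ℝ) (hu : IsW11Per u ux)
    (ξ ξx : ℝ → ℝ) (hξper : Function.Periodic ξ 1)
    (hξbd : ∀ x, ξ x ∈ Set.Icc (-Winf) Winf)
    (hξL2 : MemLp ξx 2 (volume.restrict (Set.Icc (0:ℝ) 1)))
    (hξprim : ∀ x : ℝ, ξ x = ξ 0 + ∫ t in (0:ℝ)..x, ξx t)
    (hineq : ∀ w wx : ℝ → ℝ, IsW11Per w wx →
      (∫ x in Set.Icc (0:ℝ) 1, ξ x * (wx x - ux x)) ≤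
        (∫ x in Set.Icc (0:ℝ) 1, W (wx x)) - ∫ x in Set.Icc (0:ℝ) 1, W (ux x)) :
    -- conclusion: for every `w ∈ BV(𝕋)` with `Dw = wx·L¹ + νs`, `νs ⟂ L¹`,
    ∀ (w wx : ℝ → ℝ) (νs : SignedMeasure ℝ),
      Function.Periodic w 1 → IntegrableOn wx (Set.Icc 0 1) →
      νs.totalVariation ⟂ₘ volume →
      (∀ x ∈ Set.Icc (0:ℝ) 1, w x = w 0 + (∫ t in (0:ℝ)..x, wx t) + νs (Set.Ioc 0 x)) →
      IntegrableOn w (Set.Icc 0 1) →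
      ((∫ x in Set.Icc (0:ℝ) 1, W (wx x)) + Winf * (νs.totalVariation (Set.Icc 0 1)).toReal)
          - (∫ x in Set.Icc (0:ℝ) 1, W (ux x)) ≥
        -∫ x in Set.Icc (0:ℝ) 1, ξx x * (w x - u x) :=
  neg_xi_x_in_relaxed_subdifferential_general W hWconv Winf hWplus hWminus u ux hu ξ ξx hξper hξL2
    hξprim hineq
end
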